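/- Let $1 \leq a < b \leq c < e < d$ be integers with $e \leq 2b$ and $2c \leq a+d$. Define $E_n = \bigcup_{i+j+l = n, \; i,j,l \geq 0} [jb + le, ia + jc + ld]$. Then for $n \geq 1$, $E_{n+1} = E_n + \{0,d\}$ if and only if $na + 1 \geq b$, $(n-1)a + c + 1 \geq e$, $n(d-e) \geq d - c - 1$, and $n(d-e) \geq d - e + b - a - 1$. -/

import Mathlib

/-!
If the four inequalities hold for `n`, they hold for `n + 1`, and both `E n` and `E (n + 1)` are
full intervals `[0, m d]`: writing `x = l e + r` with `0 ≤ r < e`, the point `x` lies in the box of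
`(0, 0, n)`, of `(n - l, 0, l)` or of `(n - 1 - l, 1, l)`; for the last one the required bounds are
affine in `l`, so it suffices that they hold at `l = 0` and `l = n - 1`, which are the four
inequalities. Conversely, each failing inequality yields a point of `E (n + 1)` outside
`E n ∪ (E n + d)`: `n a + 1`, `(n - 1) a + c + 1`, `n e + d - 1` and `b + (n - 1) e + d - 1`.
-/

open Pointwise

theorem Set.mem_add_zero_pair {α : Type*} [AddGroup α] {S : Set α} {d x : α} :
    x ∈ S + {0, d} ↔ x ∈ S ∨ x - d ∈ S := by
  simp [Set.mem_add, ← eq_sub_iff_add_eq, and_or_left, exists_or]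

theorem Set.ne_add_zero_pair_of_mem {α : Type*} [AddGroup α] {S T : Set α} {d x : α}
    (hxT : x ∈ T) (hxS : x ∉ S) (hxdS : x - d ∉ S) : T ≠ S + {0, d} := by
  rintro rfl
  exact (Set.mem_add_zero_pair.mp hxT).elim hxS hxdS

theorem Int.Icc_add_zero_pair {p q d : ℤ} (hd : 0 ≤ d) (hdq : d ≤ q - p + 1) :
    Set.Icc p q + {0, d} = Set.Icc p (q + d) := by
  ext x
  simp only [Set.mem_add_zero_pair, Set.mem_Icc]
  omega

theorem le_sub_mul_add_mul {R : Type*} [CommRing R] [LinearOrder R] [IsStrictOrderedRing R]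
    {K N p q l : R} (hp : K ≤ N * p) (hq : K ≤ N * q) (hl : 0 ≤ l) (hlN : l ≤ N) :
    K ≤ (N - l) * p + l * q := by
  rcases le_total p q with h | h
  · nlinarith [mul_le_mul_of_nonneg_left h hl]
  · nlinarith [mul_le_mul_of_nonneg_left h (sub_nonneg.mpr hlN)]

namespace CaseE

def expSet (a b c e d : ℤ) (n : ℕ) : Set ℤ :=
  ⋃ i : ℕ, ⋃ j : ℕ, ⋃ l : ℕ, ⋃ (_ : i + j + l = n),
    Set.Icc ((j : ℤ) * b + (l : ℤ) * e) ((i : ℤ) * a + (j : ℤ) * c + (l : ℤ) * d)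

variable {a b c e d x : ℤ} {n : ℕ}

theorem mem_expSet : x ∈ expSet a b c e d n ↔
    ∃ i j l : ℕ, i + j + l = n ∧ j * b + l * e ≤ x ∧ x ≤ i * a + j * c + l * d := by
  simp only [expSet, Set.mem_iUnion, Set.mem_Icc, exists_prop]

theorem notMem_expSet : x ∉ expSet a b c e d n ↔
    ∀ i j l : ℕ, i + j + l = n → j * b + l * e ≤ x → i * a + j * c + l * d < x := by
  simp only [mem_expSet, not_exists, not_and, not_le]

theorem nonneg_of_mem_expSet (hb : 0 ≤ b) (he : 0 ≤ e) (hx : x ∈ expSet a b c e d n) :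
    0 ≤ x := by
  obtain ⟨i, j, l, -, hlow, -⟩ := mem_expSet.mp hx
  nlinarith [j.cast_nonneg (α := ℤ), l.cast_nonneg (α := ℤ)]

theorem le_mul_of_mem_expSet (had : a ≤ d) (hcd : c ≤ d) (hx : x ∈ expSet a b c e d n) :
    x ≤ n * d := by
  obtain ⟨i, j, l, rfl, -, hup⟩ := mem_expSet.mp hx
  push_cast
  nlinarith [i.cast_nonneg (α := ℤ), j.cast_nonneg (α := ℤ)]

theorem Icc_subset_expSet (he : 0 < e) (h₁ : b ≤ n * a + 1) (h₂ : e ≤ (n - 1) * a + c + 1)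
    (h₃ : d - c - 1 ≤ n * (d - e)) (h₄ : d - e + b - a - 1 ≤ n * (d - e)) :
    Set.Icc 0 (n * d) ⊆ expSet a b c e d n := by
  rintro x ⟨hx0, hxn⟩
  rw [mem_expSet]
  set l := (x / e).toNat
  have hl : (l : ℤ) = x / e := Int.toNat_of_nonneg (Int.ediv_nonneg hx0 he.le)
  have hle : l * e ≤ x := hl ▸ Int.ediv_mul_le x he.ne'
  have hlt : x < (l + 1) * e := by rw [hl]; exact Int.lt_ediv_add_one_mul_self x he
  by_cases hnl : n ≤ l
  · refine ⟨0, 0, n, by simp, ?_, by simpa using hxn⟩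
    have : (n : ℤ) * e ≤ l * e := by gcongr
    simpa using this.trans hle
  obtain ⟨k, rfl⟩ : ∃ k, n = k + 1 + l := ⟨n - 1 - l, by omega⟩
  push_cast at h₁ h₂ h₃ h₄ ⊢
  by_cases hx : x ≤ (k + 1) * a + l * d
  · exact ⟨k + 1, 0, l, rfl, by simpa using hle, by simpa using hx⟩
  refine ⟨k, 1, l, by ring, ?_, ?_⟩
  · have := le_sub_mul_add_mul (K := b - a - 1) (N := (k + l : ℤ)) (p := a) (q := d - e) (l := l)
      (by linarith) (by linarith) (by positivity) (by simp)
    push_cast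
    linarith
  · have := le_sub_mul_add_mul (K := e - c - 1) (N := (k + l : ℤ)) (p := a) (q := d - e) (l := l)
      (by linarith) (by linarith) (by positivity) (by simp)
    push_cast
    linarith

theorem expSet_eq_Icc (hb : 0 ≤ b) (he : 0 < e) (had : a ≤ d) (hcd : c ≤ d)
    (h₁ : b ≤ n * a + 1) (h₂ : e ≤ (n - 1) * a + c + 1)
    (h₃ : d - c - 1 ≤ n * (d - e)) (h₄ : d - e + b - a - 1 ≤ n * (d - e)) :
    expSet a b c e d n = Set.Icc 0 (n * d) :=
  subset_antisymm
    (fun _ hx => ⟨nonneg_of_mem_expSet hb he.le hx, le_mul_of_mem_expSet had hcd hx⟩)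
    (Icc_subset_expSet he h₁ h₂ h₃ h₄)

theorem expSet_succ_eq_add_zero_pair (hn : 1 ≤ n) (ha : 0 ≤ a) (hb : 0 ≤ b) (he : 0 < e)
    (had : a ≤ d) (hcd : c ≤ d) (hed : e ≤ d) (h₁ : b ≤ n * a + 1) (h₂ : e ≤ (n - 1) * a + c + 1)
    (h₃ : d - c - 1 ≤ n * (d - e)) (h₄ : d - e + b - a - 1 ≤ n * (d - e)) :
    expSet a b c e d (n + 1) = expSet a b c e d n + {0, d} := by
  have hn' : (1 : ℤ) ≤ n := by exact_mod_cast hn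
  have hd : 0 ≤ d := ha.trans had
  have hnd : d ≤ n * d := le_mul_of_one_le_left hd hn'
  rw [expSet_eq_Icc hb he had hcd h₁ h₂ h₃ h₄, Int.Icc_add_zero_pair hd (by linarith),
    expSet_eq_Icc hb he had hcd] <;> push_cast
  · ring_nf
  all_goals linarith

theorem expSet_succ_ne_of_mul_add_one_lt (ha : 1 ≤ a) (hbe : b ≤ e) (hbd : b ≤ d)
    (h : n * a + 1 < b) : expSet a b c e d (n + 1) ≠ expSet a b c e d n + {0, d} := by
  have hna : 0 ≤ (n : ℤ) * a := by positivity
  refine Set.ne_add_zero_pair_of_mem (x := n * a + 1) ?_ ?_ ?_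
  · exact mem_expSet.mpr ⟨n + 1, 0, 0, rfl, by push_cast; linarith, by push_cast; linarith⟩
  · rw [notMem_expSet]
    intro i j l hs hlow
    obtain ⟨rfl, rfl⟩ : j = 0 ∧ l = 0 := by
      by_contra hjl
      have : (1 : ℤ) ≤ j + l := by norm_cast; omega
      nlinarith
    obtain rfl : i = n := by omega
    simp
  · exact fun hx => (nonneg_of_mem_expSet (by linarith) (by linarith) hx).not_gt (by linarith)

theorem expSet_succ_ne_of_sub_one_mul_add_lt (hn : 1 ≤ n) (ha : 1 ≤ a) (hac : a ≤ c)
    (hbc : b ≤ c) (hb : 0 ≤ b) (heb : e ≤ 2 * b) (hed : e ≤ d) (h : (n - 1) * a + c + 1 < e) :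
    expSet a b c e d (n + 1) ≠ expSet a b c e d n + {0, d} := by
  have hn' : (1 : ℤ) ≤ n := by exact_mod_cast hn
  have : 0 ≤ ((n : ℤ) - 1) * a := by nlinarith
  refine Set.ne_add_zero_pair_of_mem (x := (n - 1) * a + c + 1) ?_ ?_ ?_
  · exact mem_expSet.mpr ⟨n, 1, 0, rfl, by push_cast; linarith, by push_cast; linarith⟩
  · rw [notMem_expSet]
    intro i j l hs hlow
    obtain rfl : l = 0 := by
      by_contra hl
      have : (1 : ℤ) ≤ l := by norm_cast; omega
      nlinarith [j.cast_nonneg (α := ℤ)]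
    obtain _ | _ | j := j
    · obtain rfl : i = n := by omega
      push_cast; linarith
    · obtain rfl : i = n - 1 := by omega
      push_cast [Nat.cast_sub hn]; linarith
    · push_cast at hlow; nlinarith [j.cast_nonneg (α := ℤ)]
  · exact fun hx => (nonneg_of_mem_expSet hb (by linarith) hx).not_gt (by linarith)

theorem expSet_succ_ne_of_mul_lt_sub_sub_one (hac : a ≤ c) (hb : 0 ≤ b) (hbc : b ≤ c)
    (hce : c < e) (hed : e < d) (h : n * (d - e) < d - c - 1) :
    expSet a b c e d (n + 1) ≠ expSet a b c e d n + {0, d} := by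
  have hne : (n : ℤ) * e ≤ n * d := by gcongr
  refine Set.ne_add_zero_pair_of_mem (x := n * e + d - 1) ?_ ?_ ?_
  · exact mem_expSet.mpr ⟨0, 0, n + 1, by simp, by push_cast; linarith, by push_cast; linarith⟩
  · exact fun hx => (le_mul_of_mem_expSet (by linarith) (by linarith) hx).not_gt (by linarith)
  · rw [notMem_expSet]
    intro i j l hs hlow
    have hl : (l : ℤ) + 1 ≤ n := by
      by_contra!
      nlinarith [j.cast_nonneg (α := ℤ), l.cast_nonneg (α := ℤ)]
    have hs' : (i : ℤ) + j + l = n := by exact_mod_cast hs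
    have hia : (i : ℤ) * a ≤ i * c := by gcongr
    nlinarith

theorem expSet_succ_ne_of_mul_lt_sub_add_sub_sub_one (hn : 1 ≤ n) (ha : 0 ≤ a) (hbc : b ≤ c)
    (hbe : b < e) (hed : e < d) (hcd : 2 * c ≤ a + d) (h : n * (d - e) < d - e + b - a - 1) :
    expSet a b c e d (n + 1) ≠ expSet a b c e d n + {0, d} := by
  have hn' : (1 : ℤ) ≤ n := by exact_mod_cast hn
  have : ((n : ℤ) - 1) * e ≤ (n - 1) * d := by nlinarith
  refine Set.ne_add_zero_pair_of_mem (x := b + (n - 1) * e + d - 1) ?_ ?_ ?_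
  · exact mem_expSet.mpr ⟨0, 1, n, by omega, by push_cast; linarith, by push_cast; linarith⟩
  · exact fun hx => (le_mul_of_mem_expSet (by linarith) (by linarith) hx).not_gt (by linarith)
  · rw [notMem_expSet]
    intro i j l hs hlow
    have hs' : (i : ℤ) + j + l = n := by exact_mod_cast hs
    obtain _ | i := i
    · obtain _ | _ | j := j
      · obtain rfl : l = n := by omega
        push_cast at hlow; nlinarith
      · obtain rfl : l = n - 1 := by omega
        push_cast [Nat.cast_sub hn] at hlow; linarith
      · push_cast at hs' ⊢
        nlinarith [j.cast_nonneg (α := ℤ)]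
    · push_cast at hs' ⊢
      nlinarith [i.cast_nonneg (α := ℤ), j.cast_nonneg (α := ℤ)]

end CaseE

/-- Theorem 6.2 (Case E combinatorics): for `1 ≤ a < b ≤ c < e < d` with `e ≤ 2b`,
`2c ≤ a+d`, and `E n = ⋃_{i+j+l = n} [jb+le, ia+jc+ld]`, one has
`E (n+1) = E n + {0,d}` iff `na+1 ≥ b`, `(n-1)a+c+1 ≥ e`, `n(d-e) ≥ d-c-1` and
`n(d-e) ≥ d-e+b-a-1`, for `n ≥ 1`. -/
theorem caseE_iff (a b c e d : ℤ) (ha : 1 ≤ a) (hab : a < b) (hbc : b ≤ c)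
    (hce : c < e) (hed : e < d) (he : e ≤ 2 * b) (hc : 2 * c ≤ a + d)
    (E : ℕ → Set ℤ)
    (hE : ∀ n : ℕ, E n = ⋃ i : ℕ, ⋃ j : ℕ, ⋃ l : ℕ, ⋃ (_ : i + j + l = n),
        Set.Icc ((j : ℤ) * b + (l : ℤ) * e)
          ((i : ℤ) * a + (j : ℤ) * c + (l : ℤ) * d)) :
    ∀ n : ℕ, 1 ≤ n →
      (E (n + 1) = E n + ({0, d} : Set ℤ) ↔
        ((n : ℤ) * a + 1 ≥ b ∧ ((n : ℤ) - 1) * a + c + 1 ≥ e ∧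
          (n : ℤ) * (d - e) ≥ d - c - 1 ∧ (n : ℤ) * (d - e) ≥ d - e + b - a - 1)) := by
  obtain rfl : E = CaseE.expSet a b c e d := funext hE
  intro n hn
  refine ⟨fun h => ⟨?_, ?_, ?_, ?_⟩, fun ⟨h₁, h₂, h₃, h₄⟩ => ?_⟩
  · exact not_lt.mp fun h' => CaseE.expSet_succ_ne_of_mul_add_one_lt ha (by linarith)
      (by linarith) h' h
  · exact not_lt.mp fun h' => CaseE.expSet_succ_ne_of_sub_one_mul_add_lt hn ha (by linarith)
      hbc (by linarith) he hed.le h' h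
  · exact not_lt.mp fun h' => CaseE.expSet_succ_ne_of_mul_lt_sub_sub_one (by linarith)
      (by linarith) hbc hce hed h' h
  · exact not_lt.mp fun h' => CaseE.expSet_succ_ne_of_mul_lt_sub_add_sub_sub_one hn (by linarith)
      hbc (by linarith) hed hc h' h
  · exact CaseE.expSet_succ_eq_add_zero_pair hn (by linarith) (by linarith) (by linarith)
      (by linarith) (by linarith) hed.le h₁ h₂ h₃ h₄
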